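/- For each 2 ≤ m ≤ N, the angular momentum function C^{(m)}(q,p) = ∑_{1 ≤ i < j ≤ m} (qᵢpⱼ − qⱼpᵢ)² Poisson-commutes with H_λ: {C^{(m)}, H_λ} = 0 wherever 1 + λq² ≠ 0. -/

import Mathlib

open Filter Topology

noncomputable def Hlam {N : ℕ} (lam om : ℝ) (q p : Fin N → ℝ) : ℝ :=
  ((∑ i, p i ^ 2) + om ^ 2 * ∑ i, q i ^ 2) / (2 * (1 + lam * ∑ i, q i ^ 2))


noncomputable def pbracket {N : ℕ} (F G : (Fin N → ℝ) → (Fin N → ℝ) → ℝ)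
    (q p : Fin N → ℝ) : ℝ :=
  ∑ k, (deriv (fun t => F (Function.update q k t) p) (q k)
          * deriv (fun t => G q (Function.update p k t)) (p k)
        - deriv (fun t => F q (Function.update p k t)) (p k)
          * deriv (fun t => G (Function.update q k t) p) (q k))

/-!
`H_λ` depends on `(q, p)` only through `|q|²` and `|p|²`, so its gradient has the radial form
`(a q, b p)` and `{C, H_λ} = b ⟨p, ∇_q C⟩ - a ⟨q, ∇_p C⟩`. Both directional derivatives vanish:
each `q i p j - q j p i` is invariant under the shears `q ↦ q + t p` and `p ↦ p + t q`.
-/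

open Finset Function

section coordinates

variable {ι 𝕜 : Type*} [DecidableEq ι] [NontriviallyNormedField 𝕜]

lemma hasDerivAt_update_apply (x : ι → 𝕜) (k i : ι) :
    HasDerivAt (fun t => update x k t i) ((Pi.single k 1 : ι → 𝕜) i) (x k) :=
  hasDerivAt_pi.1 (hasDerivAt_update x k (x k)) i

lemma hasDerivAt_sum_sq_update [Fintype ι] (x : ι → 𝕜) (k : ι) :
    HasDerivAt (fun t => ∑ i, update x k t i ^ 2) (2 * x k) (x k) := by
  refine (HasDerivAt.fun_sum fun i _ => (hasDerivAt_update_apply x k i).fun_pow 2).congr_deriv ?_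
  simp [Pi.single_apply]

end coordinates

section Hlam

variable {N : ℕ}

lemma deriv_Hlam_update_q (lam om : ℝ) (q p : Fin N → ℝ) (h : 1 + lam * ∑ i, q i ^ 2 ≠ 0)
    (k : Fin N) :
    deriv (fun t => Hlam lam om (update q k t) p) (q k)
      = (om ^ 2 - lam * ∑ i, p i ^ 2) / (1 + lam * ∑ i, q i ^ 2) ^ 2 * q k := by
  unfold Hlam
  have hS := hasDerivAt_sum_sq_update q k
  have hnum := (hS.const_mul (om ^ 2)).const_add (∑ i, p i ^ 2)
  have hden := ((hS.const_mul lam).const_add 1).const_mul 2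
  rw [(hnum.fun_div hden (mul_ne_zero two_ne_zero (by rwa [update_eq_self]))).deriv,
    update_eq_self]
  field_simp
  ring

lemma deriv_Hlam_update_p (lam om : ℝ) (q p : Fin N → ℝ) (k : Fin N) :
    deriv (fun t => Hlam lam om q (update p k t)) (p k)
      = 1 / (1 + lam * ∑ i, q i ^ 2) * p k := by
  unfold Hlam
  rw [((hasDerivAt_sum_sq_update p k).add_const _).div_const _ |>.deriv,
    mul_div_mul_left _ _ two_ne_zero]
  ring

end Hlam

section angMomSq

variable {ι : Type*} [Fintype ι] (P : ι → ι → Prop) [DecidableRel P]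

def angMomSq (q p : ι → ℝ) : ℝ :=
  ∑ i, ∑ j, if P i j then (q i * p j - q j * p i) ^ 2 else 0

lemma angMomSq_comm (q p : ι → ℝ) : angMomSq P q p = angMomSq P p q := by
  unfold angMomSq
  congr! 3
  ring

lemma hasDerivAt_angMomSq_update [DecidableEq ι] (q p : ι → ℝ) (k : ι) :
    HasDerivAt (fun t => angMomSq P (update q k t) p)
      (∑ i, ∑ j, if P i j then
        2 * (q i * p j - q j * p i)
          * ((Pi.single k 1 : ι → ℝ) i * p j - (Pi.single k 1 : ι → ℝ) j * p i)
        else 0) (q k) := by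
  refine HasDerivAt.fun_sum fun i _ => HasDerivAt.fun_sum fun j _ => ?_
  split_ifs
  · refine ((((hasDerivAt_update_apply q k i).mul_const (p j)).fun_sub
      ((hasDerivAt_update_apply q k j).mul_const (p i))).fun_pow 2).congr_deriv ?_
    simp
  · exact hasDerivAt_const _ _

/-- Each `q i p j - q j p i` is invariant under the shear `q ↦ q + t p`. -/
lemma sum_mul_deriv_angMomSq_update_q [DecidableEq ι] (q p : ι → ℝ) :
    ∑ k, p k * deriv (fun t => angMomSq P (update q k t) p) (q k) = 0 := by
  simp_rw [(hasDerivAt_angMomSq_update P q p _).deriv, mul_sum]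
  rw [sum_comm]
  refine sum_eq_zero fun i _ => ?_
  rw [sum_comm]
  refine sum_eq_zero fun j _ => ?_
  split_ifs
  · simp only [mul_sub, Pi.single_apply, ite_mul, one_mul, zero_mul, mul_ite, mul_zero,
      sum_sub_distrib, sum_ite_eq, mem_univ, ↓reduceIte]
    ring
  · simp

lemma sum_mul_deriv_angMomSq_update_p [DecidableEq ι] (q p : ι → ℝ) :
    ∑ k, q k * deriv (fun t => angMomSq P q (update p k t)) (p k) = 0 := by
  simp_rw [angMomSq_comm P q]
  exact sum_mul_deriv_angMomSq_update_q P p q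

end angMomSq

lemma pbracket_angMomSq_eq_zero_of_radial {N : ℕ} (P : Fin N → Fin N → Prop) [DecidableRel P]
    {G : (Fin N → ℝ) → (Fin N → ℝ) → ℝ} {q p : Fin N → ℝ} {a b : ℝ}
    (hq : ∀ k, deriv (fun t => G (update q k t) p) (q k) = a * q k)
    (hp : ∀ k, deriv (fun t => G q (update p k t)) (p k) = b * p k) :
    pbracket (angMomSq P) G q p = 0 := by
  have hbracket : pbracket (angMomSq P) G q p
      = b * ∑ k, p k * deriv (fun t => angMomSq P (update q k t) p) (q k)
        - a * ∑ k, q k * deriv (fun t => angMomSq P q (update p k t)) (p k) := by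
    simp only [pbracket, hq, hp, mul_sum, ← sum_sub_distrib]
    congr! 1
    ring
  rw [hbracket, sum_mul_deriv_angMomSq_update_q, sum_mul_deriv_angMomSq_update_p]
  ring

theorem stmt_3_general {N : ℕ} (lam om : ℝ) (m : ℕ)
    (q p : Fin N → ℝ) (h : 1 + lam * ∑ k, q k ^ 2 ≠ 0) :
    pbracket
      (fun q p => ∑ i : Fin N, ∑ j : Fin N,
        if (i : ℕ) < (j : ℕ) ∧ (j : ℕ) < m then (q i * p j - q j * p i) ^ 2 else 0)
      (Hlam lam om) q p = 0 :=
  pbracket_angMomSq_eq_zero_of_radial (fun i j => (i : ℕ) < j ∧ (j : ℕ) < m)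
    (deriv_Hlam_update_q lam om q p h) (deriv_Hlam_update_p lam om q p)

theorem stmt_3 {N : ℕ} (lam om : ℝ) (m : ℕ) (hm2 : 2 ≤ m) (hmN : m ≤ N)
    (q p : Fin N → ℝ) (h : 1 + lam * ∑ k, q k ^ 2 ≠ 0) :
    pbracket
      (fun q p => ∑ i : Fin N, ∑ j : Fin N,
        if (i : ℕ) < (j : ℕ) ∧ (j : ℕ) < m then (q i * p j - q j * p i) ^ 2 else 0)
      (Hlam lam om) q p = 0 :=
  stmt_3_general lam om m q p h
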